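/- Let X be a finite nonempty alphabet and p a probability distribution on X with p(x) > 0 for all x. Then H*(p) = (1/2)·Σ_x [ p(x) log₂( 2p(x) / (p(x)+p(x)²) ) + p(x)² log₂( 2p(x)² / (p(x)+p(x)²) ) ] + h(p)/2, where h(p) = Σ_{x ≠ x'} p(x)p(x') is the logical entropy of p. -/
import Mathlib


/-- Lin entropy of a strictly positive distribution. -/
noncomputable def linEntropy {X : Type*} [Fintype X] (p : X → ℝ) : ℝ :=
  ∑ x, p x * ((1 / 2) * Real.logb 2 (4 * p x ^ p x / (p x + 1) ^ (p x + 1)))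

lemma pointwise_lin (a : ℝ) (ha : 0 < a) :
    a * ((1 / 2) * Real.logb 2 (4 * a ^ a / (a + 1) ^ (a + 1))) =
      (1 / 2) * (a * Real.logb 2 (2 * a / (a + a ^ 2)) +
        a ^ 2 * Real.logb 2 (2 * a ^ 2 / (a + a ^ 2))) + (a - a ^ 2) / 2 := by
  have h1 : (0:ℝ) < a + 1 := by linarith
  have hl2 : Real.log 2 ≠ 0 := by
    have := Real.log_pos (by norm_num : (1:ℝ) < 2); linarith
  have haa : (0:ℝ) < a ^ a := Real.rpow_pos_of_pos ha a
  have h1a : (0:ℝ) < (a + 1) ^ (a + 1) := Real.rpow_pos_of_pos h1 _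
  have hlog1 : Real.log (4 * a ^ a / (a + 1) ^ (a + 1)) =
      2 * Real.log 2 + a * Real.log a - (a + 1) * Real.log (a + 1) := by
    rw [Real.log_div (by positivity) (ne_of_gt h1a),
      Real.log_mul (by norm_num) (ne_of_gt haa),
      Real.log_rpow ha, Real.log_rpow h1,
      show (4:ℝ) = 2 ^ 2 by norm_num, Real.log_pow]
    push_cast; ring
  have e1 : 2 * a / (a + a ^ 2) = 2 / (a + 1) := by
    field_simp; ring
  have e2 : 2 * a ^ 2 / (a + a ^ 2) = 2 * a / (a + 1) := by
    field_simp; ring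
  have hlog2 : Real.log (2 * a / (a + a ^ 2)) = Real.log 2 - Real.log (a + 1) := by
    rw [e1, Real.log_div (by norm_num) (ne_of_gt h1)]
  have hlog3 : Real.log (2 * a ^ 2 / (a + a ^ 2)) =
      Real.log 2 + Real.log a - Real.log (a + 1) := by
    rw [e2, Real.log_div (by positivity) (ne_of_gt h1),
      Real.log_mul (by norm_num) (ne_of_gt ha)]
  simp only [Real.logb, hlog1, hlog2, hlog3]
  field_simp
  ring

theorem linEntropy_eq_diag_add_half_logicalEntropy
    {X : Type*} [Fintype X] [DecidableEq X] [Nonempty X] (p : X → ℝ)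
    (hp : ∀ x, 0 < p x) (hsum : ∑ x, p x = 1) :
    linEntropy p =
      (1 / 2) * (∑ x, (p x * Real.logb 2 (2 * p x / (p x + p x ^ 2)) +
          p x ^ 2 * Real.logb 2 (2 * p x ^ 2 / (p x + p x ^ 2)))) +
        (∑ x, ∑ x', if x = x' then 0 else p x * p x') / 2 := by
  have hrow : ∀ x : X, (∑ x', if x = x' then 0 else p x * p x') = p x - p x ^ 2 := by
    intro x
    have : ∀ x' : X, (if x = x' then 0 else p x * p x') =
        p x * p x' - (if x = x' then p x * p x' else 0) := by
      intro x'; by_cases h : x = x' <;> simp [h]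
    rw [Finset.sum_congr rfl fun x' _ => this x', Finset.sum_sub_distrib,
      Finset.sum_ite_eq, ← Finset.mul_sum, hsum]
    simp; ring
  rw [Finset.sum_congr rfl fun x _ => hrow x]
  unfold linEntropy
  rw [Finset.sum_congr rfl fun x _ => pointwise_lin (p x) (hp x),
    Finset.sum_add_distrib, Finset.mul_sum, ← Finset.sum_div]
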